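/- Define endomorphisms f_j of V^{⊗j} recursively by f₁ = id_{ℂ²}, f₂ = id_{ℂ²⊗ℂ²} + (1/2)·(coev ∘ ev + e), and f_{j+1} = (f_j ⊗ id) + (f_j ⊗ id) ∘ (id^{⊗(j−1)} ⊗ (coev ∘ ev)) ∘ (f_j ⊗ id) for j ≥ 2. Then for every j ≥ 1: f_j is a nonzero idempotent (f_j ∘ f_j = f_j), f_j is Dic∞-equivariant, the image of f_j is exactly the subspace V_j spanned by v₁^{⊗j} and v₂^{⊗j}, and the simple representation V_j occurs in V^{⊗j} with multiplicity one, i.e. dim_ℂ Hom_{Dic∞}(V_j, V^{⊗j}) = 1. -/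

import Mathlib

open scoped TensorProduct
open Matrix

noncomputable section

/-- `ℂ²`, the standard two-dimensional complex vector space. -/
abbrev V2 : Type := Fin 2 → ℂ

/-- The standard representation of a subgroup `G ≤ GL₂(ℂ)` on `ℂ²`, by matrix-vector
multiplication. -/
def stdRep (G : Subgroup (GL (Fin 2) ℂ)) : Representation ℂ G V2 where
  toFun g := Matrix.toLin' ((g : GL (Fin 2) ℂ) : Matrix (Fin 2) (Fin 2) ℂ)
  map_one' := by
    simp only [OneMemClass.coe_one, Units.val_one, Matrix.toLin'_one]
    rfl
  map_mul' g h := by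
    simp only [MulMemClass.coe_mul, Units.val_mul, Matrix.toLin'_mul]
    rfl

/-- `TPow j` is the `(j+1)`-st tensor power `V^{⊗(j+1)}` of `V = ℂ²`, realized as an
iterated binary tensor product (bundled as an object of `ModuleCat ℂ` so that the
recursion carries its module structure). -/
def TPow : ℕ → ModuleCat ℂ
  | 0 => ModuleCat.of ℂ V2
  | (j + 1) => ModuleCat.of ℂ (TPow j ⊗[ℂ] V2)

/-- The diagonal representation of `G ≤ GL₂(ℂ)` on `TPow j = V^{⊗(j+1)}`. -/
def TPowRep (G : Subgroup (GL (Fin 2) ℂ)) : (j : ℕ) → Representation ℂ G (TPow j)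
  | 0 => stdRep G
  | (j + 1) => (TPowRep G j).tprod (stdRep G)

/-- The basis vector `v_s^{⊗(j+1)}` of `TPow j = V^{⊗(j+1)}`, for `s : Fin 2`. -/
def vpow (s : Fin 2) : (j : ℕ) → TPow j
  | 0 => Pi.single s 1
  | (j + 1) => vpow s j ⊗ₜ[ℂ] Pi.single s 1

/-- The subspace `V_{j+1}` of `V^{⊗(j+1)}` spanned by `v₁^{⊗(j+1)}` and `v₂^{⊗(j+1)}`. -/
def Vsub (j : ℕ) : Submodule ℂ (TPow j) := Submodule.span ℂ {vpow 0 j, vpow 1 j}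

/-- The standard basis vectors `v₁ = bv 0`, `v₂ = bv 1` of `ℂ²`. -/
def bv (s : Fin 2) : V2 := Pi.single s 1

/-- The evaluation map `ev : ℂ²⊗ℂ² → ℂ`, determined by `ev(v₁⊗v₁) = ev(v₂⊗v₂) = 0`,
`ev(v₁⊗v₂) = 1` and `ev(v₂⊗v₁) = −1`. -/
def evMap : (V2 ⊗[ℂ] V2) →ₗ[ℂ] ℂ :=
  TensorProduct.lift
    (LinearMap.mk₂ ℂ (fun v w => v 0 * w 1 - v 1 * w 0)
      (fun m₁ m₂ n => by simp only [Pi.add_apply]; ring)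
      (fun c m n => by simp only [Pi.smul_apply, smul_eq_mul]; ring)
      (fun m n₁ n₂ => by simp only [Pi.add_apply]; ring)
      (fun c m n => by simp only [Pi.smul_apply, smul_eq_mul]; ring))

/-- The coevaluation map `coev : ℂ → ℂ²⊗ℂ²`, `1 ↦ v₂⊗v₁ − v₁⊗v₂`. -/
def coevMap : ℂ →ₗ[ℂ] (V2 ⊗[ℂ] V2) :=
  LinearMap.toSpanSingleton ℂ (V2 ⊗[ℂ] V2) (bv 1 ⊗ₜ[ℂ] bv 0 - bv 0 ⊗ₜ[ℂ] bv 1)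

/-- The map `e : ℂ²⊗ℂ² → ℂ²⊗ℂ²` with `e(v₁⊗v₁) = e(v₂⊗v₂) = 0` and
`e(v₁⊗v₂) = e(v₂⊗v₁) = −(v₁⊗v₂ + v₂⊗v₁)`. -/
def eMap : (V2 ⊗[ℂ] V2) →ₗ[ℂ] (V2 ⊗[ℂ] V2) :=
  TensorProduct.lift
    (LinearMap.mk₂ ℂ
      (fun v w => (-(v 0 * w 1 + v 1 * w 0)) • (bv 0 ⊗ₜ[ℂ] bv 1 + bv 1 ⊗ₜ[ℂ] bv 0))
      (fun m₁ m₂ n => by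
        simp only [Pi.add_apply]
        rw [← add_smul]; ring_nf)
      (fun c m n => by
        simp only [Pi.smul_apply, smul_eq_mul]
        rw [smul_smul]; ring_nf)
      (fun m n₁ n₂ => by
        simp only [Pi.add_apply]
        rw [← add_smul]; ring_nf)
      (fun c m n => by
        simp only [Pi.smul_apply, smul_eq_mul]
        rw [smul_smul]; ring_nf))

/-- The operator `id^{⊗(m+1)} ⊗ (coev ∘ ev)` on `V^{⊗(m+3)} = TPow (m+2)`, acting by
`coev ∘ ev` on the last two tensor factors. -/
def idTensorCapcup (m : ℕ) : TPow (m + 2) →ₗ[ℂ] TPow (m + 2) :=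
  (TensorProduct.assoc ℂ (TPow m) V2 V2).symm.toLinearMap ∘ₗ
    TensorProduct.map LinearMap.id (coevMap ∘ₗ evMap) ∘ₗ
    (TensorProduct.assoc ℂ (TPow m) V2 V2).toLinearMap

/-- The dicyclic Jones–Wenzl projectors: `fproj m` is the endomorphism `f_{m+1}` of
`V^{⊗(m+1)} = TPow m`, defined recursively by `f₁ = id`, `f₂ = id + ½(coev∘ev + e)` and
`f_{j+1} = (f_j ⊗ id) + (f_j ⊗ id) ∘ (id^{⊗(j−1)} ⊗ (coev∘ev)) ∘ (f_j ⊗ id)` for `j ≥ 2`. -/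
def fproj : (m : ℕ) → (TPow m →ₗ[ℂ] TPow m)
  | 0 => LinearMap.id
  | 1 => LinearMap.id + (2⁻¹ : ℂ) • (coevMap ∘ₗ evMap + eMap)
  | (m + 2) =>
      TensorProduct.map (fproj (m + 1)) LinearMap.id +
        TensorProduct.map (fproj (m + 1)) LinearMap.id ∘ₗ idTensorCapcup m ∘ₗ
          TensorProduct.map (fproj (m + 1)) LinearMap.id

/-- The space `Hom_G(p, W)` of `G`-equivariant linear maps from a subrepresentation
`p ≤ W` to `W` (equivariance is expressed via the ambient action). -/
def homG {G W : Type*} [Group G] [AddCommGroup W] [Module ℂ W]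
    (ρ : Representation ℂ G W) (p : Submodule ℂ W) : Submodule ℂ (p →ₗ[ℂ] W) where
  carrier := {φ | ∀ (g : G) (w w' : p), ρ g (w : W) = (w' : W) → φ w' = ρ g (φ w)}
  add_mem' := by
    intro φ ψ hφ hψ g w w' h
    simp only [LinearMap.add_apply, hφ g w w' h, hψ g w w' h, map_add]
  zero_mem' := by
    intro g w w' h
    simp only [LinearMap.zero_apply, map_zero]
  smul_mem' := by
    intro c φ hφ g w w' h
    simp only [LinearMap.smul_apply, hφ g w w' h, LinearMap.map_smul]

/-!
The recursion is solved in closed form: `f_j` is the projection of `V^{⊗j}` onto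
`V_j = span {v₁^{⊗j}, v₂^{⊗j}}` along the other vectors of the tensor basis, because
`(f_j ⊗ id) ∘ (id ⊗ coev ∘ ev)` sends `v_s^{⊗j} ⊗ v` to minus `v_s^{⊗j}` tensored with the
component of `v` off `v_s`. Idempotence and the image are then immediate. Both generators act
monomially on `v₁, v₂`, so their tensor powers permute and rescale the tensor basis, preserving
`V_j` and its complement; hence `f_j` is equivariant.

For multiplicity one, an equivariant `φ : V_j → V^{⊗j}` sends `v₁^{⊗j}` to an eigenvector of
`a^{⊗j}` for `e^{ijθ}`. As `e^{iθ}` is not a root of unity, the weight `j` of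
`diag(e^{iθ}, e^{-iθ})` occurs in `V^{⊗j}` only on the line of `v₁^{⊗j}`, so
`φ v₁^{⊗j} = k v₁^{⊗j}`, and applying `x` gives `φ v₂^{⊗j} = k v₂^{⊗j}`.
-/

lemma bv_apply (s t : Fin 2) : bv s t = if t = s then 1 else 0 := by
  simp [bv, Pi.single_apply]

lemma exists_eq_bv_combination (v : V2) : ∃ a b : ℂ, v = a • bv 0 + b • bv 1 :=
  ⟨v 0, v 1, by ext i; fin_cases i <;> simp [bv_apply]⟩

lemma vpow_succ (s : Fin 2) (m : ℕ) : vpow s (m + 1) = vpow s m ⊗ₜ[ℂ] bv s := rfl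

def vcoeff (s : Fin 2) : (m : ℕ) → TPow m →ₗ[ℂ] ℂ
  | 0 => LinearMap.proj s
  | (m + 1) => LinearMap.mul' ℂ ℂ ∘ₗ TensorProduct.map (vcoeff s m) (LinearMap.proj s)

lemma vcoeff_zero_apply (s : Fin 2) (v : V2) : vcoeff s 0 v = v s := rfl

lemma vcoeff_tmul (s : Fin 2) (m : ℕ) (x : TPow m) (v : V2) :
    vcoeff s (m + 1) (x ⊗ₜ[ℂ] v) = vcoeff s m x * v s := rfl

lemma vcoeff_vpow (s t : Fin 2) : ∀ m, vcoeff s m (vpow t m) = if s = t then 1 else 0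
  | 0 => by simp [vcoeff_zero_apply, vpow, Pi.single_apply]
  | (m + 1) => by
    rw [vpow_succ, vcoeff_tmul, vcoeff_vpow s t m, bv_apply]
    split_ifs <;> simp

lemma vpow_ne_zero (s : Fin 2) (m : ℕ) : vpow s m ≠ 0 := fun h => by
  simpa [h] using vcoeff_vpow s s m

def vsubProj (m : ℕ) : TPow m →ₗ[ℂ] TPow m :=
  ∑ s, LinearMap.toSpanSingleton ℂ (TPow m) (vpow s m) ∘ₗ vcoeff s m

lemma vsubProj_apply (m : ℕ) (x : TPow m) :
    vsubProj m x = ∑ s, vcoeff s m x • vpow s m := by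
  simp [vsubProj]

lemma vsubProj_vpow (m : ℕ) (s : Fin 2) : vsubProj m (vpow s m) = vpow s m := by
  simp [vsubProj_apply, vcoeff_vpow]

lemma vsubProj_tmul (m : ℕ) (x : TPow m) (v : V2) :
    vsubProj (m + 1) (x ⊗ₜ[ℂ] v) = ∑ s, (vcoeff s m x * v s) • vpow s (m + 1) :=
  vsubProj_apply (m + 1) (x ⊗ₜ[ℂ] v)

lemma idTensorCapcup_tmul (m : ℕ) (x : TPow m) (u v : V2) :
    idTensorCapcup m ((x ⊗ₜ[ℂ] u) ⊗ₜ[ℂ] v) =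
      (u 0 * v 1 - u 1 * v 0) •
        ((x ⊗ₜ[ℂ] bv 1) ⊗ₜ[ℂ] bv 0 - (x ⊗ₜ[ℂ] bv 0) ⊗ₜ[ℂ] bv 1) := by
  show (TensorProduct.assoc ℂ (TPow m) V2 V2).symm
      (TensorProduct.map LinearMap.id (coevMap ∘ₗ evMap)
        (TensorProduct.assoc ℂ (TPow m) V2 V2 ((x ⊗ₜ[ℂ] u) ⊗ₜ[ℂ] v))) = _
  simp only [TensorProduct.assoc_tmul, TensorProduct.map_tmul, LinearMap.id_apply,
    LinearMap.comp_apply, evMap, coevMap, TensorProduct.lift.tmul, LinearMap.mk₂_apply,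
    LinearMap.toSpanSingleton_apply, TensorProduct.tmul_smul, TensorProduct.tmul_sub,
    map_smul, map_sub, TensorProduct.assoc_symm_tmul]
  module

lemma vsubProj_vpow_tmul (m : ℕ) (s r : Fin 2) :
    vsubProj (m + 1) (vpow s m ⊗ₜ[ℂ] bv r) = bv r s • vpow s (m + 1) := by
  rw [vsubProj_tmul]
  fin_cases s <;> simp [vcoeff_vpow]

lemma vsubProj_map_idTensorCapcup_vpow (m : ℕ) (s : Fin 2) (v : V2) :
    TensorProduct.map (vsubProj (m + 1)) LinearMap.id (idTensorCapcup m (vpow s (m + 1) ⊗ₜ[ℂ] v)) =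
      vpow s (m + 1) ⊗ₜ[ℂ] (v s • bv s - v) := by
  obtain ⟨a, b, rfl⟩ := exists_eq_bv_combination v
  conv_lhs => rw [vpow_succ, idTensorCapcup_tmul]
  -- `TPow (m + 2)` is `TPow (m + 1) ⊗ V2` only up to unfolding, hence `erw` here and below.
  erw [map_smul, map_sub, TensorProduct.map_tmul, TensorProduct.map_tmul]
  simp only [LinearMap.id_apply, vsubProj_vpow_tmul]
  fin_cases s <;> simp [bv_apply, TensorProduct.tmul_neg, TensorProduct.tmul_smul,
    TensorProduct.smul_tmul']

lemma map_vsubProj_id_tmul (m : ℕ) (x : TPow (m + 1)) (v : V2) :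
    TensorProduct.map (vsubProj (m + 1)) LinearMap.id (x ⊗ₜ[ℂ] v) =
      ∑ s, vcoeff s (m + 1) x • (vpow s (m + 1) ⊗ₜ[ℂ] v) := by
  rw [TensorProduct.map_tmul, vsubProj_apply, LinearMap.id_apply, TensorProduct.sum_tmul]
  simp only [TensorProduct.smul_tmul']

lemma fproj_one_tmul (x y : V2) :
    fproj 1 (x ⊗ₜ[ℂ] y) = ∑ s, (x s * y s) • (bv s ⊗ₜ[ℂ] bv s) := by
  change x ⊗ₜ[ℂ] y + (2⁻¹ : ℂ) • (coevMap (evMap (x ⊗ₜ[ℂ] y)) + eMap (x ⊗ₜ[ℂ] y)) = _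
  obtain ⟨a, b, rfl⟩ := exists_eq_bv_combination x
  obtain ⟨c, d, rfl⟩ := exists_eq_bv_combination y
  simp only [evMap, eMap, coevMap, TensorProduct.lift.tmul, LinearMap.mk₂_apply,
    LinearMap.toSpanSingleton_apply]
  simp [bv_apply, TensorProduct.tmul_add, TensorProduct.add_tmul, TensorProduct.tmul_smul,
    ← TensorProduct.smul_tmul']
  module

theorem fproj_eq_vsubProj : ∀ m, fproj m = vsubProj m
  | 0 => LinearMap.ext fun x => by
    rw [vsubProj_apply]
    change x = ∑ s, x s • bv s
    funext i
    fin_cases i <;> simp [bv_apply]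
  | 1 => TensorProduct.ext' fun x y => (fproj_one_tmul x y).trans (vsubProj_tmul 0 x y).symm
  | (m + 2) => TensorProduct.ext' fun x v => by
    show TensorProduct.map (fproj (m + 1)) LinearMap.id (x ⊗ₜ[ℂ] v) +
        TensorProduct.map (fproj (m + 1)) LinearMap.id (idTensorCapcup m
          (TensorProduct.map (fproj (m + 1)) LinearMap.id (x ⊗ₜ[ℂ] v))) = _
    refine Eq.trans ?_ (vsubProj_tmul (m + 1) x v).symm
    rw [fproj_eq_vsubProj (m + 1), map_vsubProj_id_tmul]
    erw [map_sum, map_sum]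
    rw [← Finset.sum_add_distrib]
    refine Finset.sum_congr rfl fun s _ => ?_
    erw [map_smul, map_smul]
    rw [vsubProj_map_idTensorCapcup_vpow, ← smul_add,
      ← TensorProduct.tmul_add, add_sub_cancel, TensorProduct.tmul_smul, smul_smul]
    rfl

theorem vsubProj_comp_self (m : ℕ) : vsubProj m ∘ₗ vsubProj m = vsubProj m :=
  LinearMap.ext fun x => by
    rw [LinearMap.comp_apply, vsubProj_apply m x, map_sum]
    simp only [map_smul, vsubProj_vpow]

theorem vsubProj_ne_zero (m : ℕ) : vsubProj m ≠ 0 := fun h =>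
  vpow_ne_zero 0 m <| by simpa [h] using (vsubProj_vpow m 0).symm

lemma vpow_mem_Vsub (s : Fin 2) (m : ℕ) : vpow s m ∈ Vsub m :=
  Submodule.subset_span <| by fin_cases s <;> simp

theorem range_vsubProj (m : ℕ) : LinearMap.range (vsubProj m) = Vsub m := by
  refine le_antisymm ?_ ?_
  · rintro _ ⟨x, rfl⟩
    rw [vsubProj_apply]
    exact Submodule.sum_mem _ fun s _ => Submodule.smul_mem _ _ (vpow_mem_Vsub s m)
  · rw [Vsub, Submodule.span_le]
    rintro _ (rfl | rfl)
    exacts [⟨_, vsubProj_vpow m 0⟩, ⟨_, vsubProj_vpow m 1⟩]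

def tpowMap (T : V2 →ₗ[ℂ] V2) : (m : ℕ) → TPow m →ₗ[ℂ] TPow m
  | 0 => T
  | (m + 1) => TensorProduct.map (tpowMap T m) T

lemma TPowRep_apply (G : Subgroup (GL (Fin 2) ℂ)) (g : G) :
    ∀ m, TPowRep G m g = tpowMap (Matrix.toLin' (g : GL (Fin 2) ℂ).val) m
  | 0 => rfl
  | (m + 1) => congrArg (TensorProduct.map · _) (TPowRep_apply G g m)

lemma tpowMap_vpow {T : V2 →ₗ[ℂ] V2} {s r : Fin 2} {a : ℂ} (h : T (bv s) = a • bv r) :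
    ∀ m, tpowMap T m (vpow s m) = a ^ (m + 1) • vpow r m
  | 0 => by
    change T (bv s) = a ^ 1 • bv r
    rw [pow_one, h]
  | (m + 1) => by
    change tpowMap T m (vpow s m) ⊗ₜ[ℂ] T (bv s) = a ^ (m + 2) • (vpow r m ⊗ₜ[ℂ] bv r)
    rw [tpowMap_vpow h m, h, TensorProduct.smul_tmul_smul, ← pow_succ]

section Monomial

variable {T : V2 →ₗ[ℂ] V2} {σ : Equiv.Perm (Fin 2)} {t : Fin 2 → ℂ}

lemma apply_perm_of_monomial (hT : ∀ s, T (bv s) = t s • bv (σ s)) (v : V2) (s : Fin 2) :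
    T v (σ s) = t s * v s := by
  obtain ⟨a, b, rfl⟩ := exists_eq_bv_combination v
  fin_cases s <;> simp [hT, bv_apply, σ.injective.eq_iff] <;> ring

lemma vcoeff_comp_tpowMap_of_monomial (hT : ∀ s, T (bv s) = t s • bv (σ s)) (s : Fin 2) :
    ∀ m, vcoeff (σ s) m ∘ₗ tpowMap T m = t s ^ (m + 1) • vcoeff s m
  | 0 => LinearMap.ext fun (v : V2) => by
    change T v (σ s) = t s ^ 1 * v s
    rw [pow_one, apply_perm_of_monomial hT]
  | (m + 1) => TensorProduct.ext' fun x v => by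
    have ih := LinearMap.congr_fun (vcoeff_comp_tpowMap_of_monomial hT s m) x
    change vcoeff (σ s) m (tpowMap T m x) * T v (σ s) = t s ^ (m + 2) * (vcoeff s m x * v s)
    rw [LinearMap.comp_apply] at ih
    rw [ih, apply_perm_of_monomial hT, LinearMap.smul_apply, smul_eq_mul]
    ring

theorem vsubProj_comp_tpowMap_of_monomial (hT : ∀ s, T (bv s) = t s • bv (σ s)) (m : ℕ) :
    vsubProj m ∘ₗ tpowMap T m = tpowMap T m ∘ₗ vsubProj m := LinearMap.ext fun x => by
  simp only [LinearMap.comp_apply, vsubProj_apply, map_sum, map_smul,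
    tpowMap_vpow (hT _)]
  rw [← Equiv.sum_comp σ]
  refine Finset.sum_congr rfl fun s _ => ?_
  rw [← LinearMap.comp_apply (vcoeff _ m), vcoeff_comp_tpowMap_of_monomial hT, smul_smul,
    LinearMap.smul_apply, smul_eq_mul, mul_comm]

lemma piScalarRight_map_apply_of_monomial {M : Type*} [AddCommGroup M] [Module ℂ M]
    (hT : ∀ s, T (bv s) = t s • bv (σ s)) (S : M →ₗ[ℂ] M) (y : M ⊗[ℂ] V2) (s : Fin 2) :
    TensorProduct.piScalarRight ℂ ℂ M (Fin 2) (TensorProduct.map S T y) (σ s) =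
      t s • S (TensorProduct.piScalarRight ℂ ℂ M (Fin 2) y s) := by
  induction y using TensorProduct.induction_on with
  | zero => simp
  | tmul x v =>
    simp [TensorProduct.piScalarRight_apply, TensorProduct.piScalarRightHom_tmul,
      apply_perm_of_monomial hT, mul_smul]
  | add y z hy hz => simp only [map_add, Pi.add_apply, hy, hz, smul_add]

end Monomial

theorem commute_apply_of_closure_eq_top {G M : Type*} [Group G] [Monoid M] (f : G →* M)
    {s : Set G} (hs : Subgroup.closure s = ⊤) {a : M} (h : ∀ g ∈ s, Commute a (f g)) (g : G) :
    Commute a (f g) := by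
  have hg : g ∈ Subgroup.closure s := hs ▸ Subgroup.mem_top g
  induction hg using Subgroup.closure_induction with
  | mem g hg => exact h g hg
  | one => simp
  | mul g k _ _ hg hk => simpa using hg.mul_right hk
  | inv g _ hg =>
    have hinv := (show Commute a (f.toHomUnits g) from hg).units_inv_right
    rwa [← map_inv, MonoidHom.coe_toHomUnits] at hinv

lemma toLin'_rotation_bv (s : Fin 2) :
    Matrix.toLin' !![0, -1; 1, 0] (bv s) = (![1, -1] : Fin 2 → ℂ) s • bv (Equiv.swap 0 1 s) := by
  funext i
  fin_cases s <;> fin_cases i <;> simp [bv, Matrix.toLin'_apply]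

lemma toLin'_diagonal_bv (z w : ℂ) (s : Fin 2) :
    Matrix.toLin' !![z, 0; 0, w] (bv s) = ![z, w] s • bv s := by
  funext i
  fin_cases s <;> fin_cases i <;> simp [bv, Matrix.toLin'_apply]

lemma injective_zpow_exp_mul_I {θ : ℝ} (hθ : Irrational (θ / Real.pi)) :
    Function.Injective fun k : ℤ => Complex.exp (θ * Complex.I) ^ k := by
  intro a b hab
  simp only [← Complex.exp_int_mul, Complex.exp_eq_exp_iff_exists_int] at hab
  obtain ⟨n, hn⟩ := hab
  have him := congrArg Complex.im hn
  simp at him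
  by_contra hne
  have hab : (a : ℝ) - b ≠ 0 := sub_ne_zero.2 (by exact_mod_cast hne)
  refine hθ ⟨2 * n / (a - b), ?_⟩
  push_cast
  field_simp
  linarith

section Eigenvectors

variable {T : V2 →ₗ[ℂ] V2} {c : ℂ}

lemma eq_zero_of_mem_span_vpow_of_tpowMap_eq (hT0 : T (bv 0) = c • bv 0) {m : ℕ} {k : ℤ}
    (hk : c ^ k ≠ c ^ (m + 1)) {z : TPow m} (hz : z ∈ ℂ ∙ vpow 0 m)
    (h : tpowMap T m z = c ^ k • z) : z = 0 := by
  obtain ⟨b, rfl⟩ := Submodule.mem_span_singleton.1 hz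
  rw [map_smul, tpowMap_vpow hT0, smul_smul, smul_smul] at h
  have hb := smul_left_injective ℂ (vpow_ne_zero 0 m) h
  by_contra hne
  exact hk (mul_left_cancel₀ (left_ne_zero_of_smul hne) (hb.trans (mul_comm _ _))).symm

theorem mem_span_vpow_of_tpowMap_eq_zpow_smul (hc : Function.Injective fun k : ℤ => c ^ k)
    (hT0 : T (bv 0) = c • bv 0) (hT1 : T (bv 1) = c⁻¹ • bv 1) :
    ∀ (m : ℕ) {n : ℤ}, (m : ℤ) + 1 ≤ n → ∀ {y : TPow m}, tpowMap T m y = c ^ n • y →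
      y ∈ ℂ ∙ vpow 0 m := by
  have hT : ∀ s, T (bv s) = c ^ (![1, -1] s : ℤ) • bv (Equiv.refl (Fin 2) s) := by
    simp [Fin.forall_fin_two, hT0, hT1]
  have hc0 : c ≠ 0 := fun h => by
    have := @hc 1 2 (by simp [h])
    omega
  intro m
  induction m with
  | zero =>
    intro n hn y hy
    have h1 : c ^ (-1 : ℤ) * y 1 = c ^ n * y 1 :=
      (apply_perm_of_monomial hT y 1).symm.trans (congrFun (show T y = c ^ n • (y : V2) from hy) 1)
    have hy1 : y 1 = 0 := by
      by_contra hne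
      exact hc.ne (show (-1 : ℤ) ≠ n by omega) (mul_right_cancel₀ hne h1)
    refine Submodule.mem_span_singleton.2 ⟨y 0, ?_⟩
    change y 0 • bv 0 = y
    funext i
    fin_cases i <;> simp [bv_apply, hy1]
  | succ m ih =>
    -- The two slices of `y` along the last factor are eigenvectors for `c ^ (n - 1)` and
    -- `c ^ (n + 1)`; the second lies on the line of `vpow 0 m`, of weight `m + 1 < n + 1`,
    -- so it vanishes.
    intro n hn y hy
    let e : TPow (m + 1) ≃ₗ[ℂ] (Fin 2 → TPow m) := TensorProduct.piScalarRight ℂ ℂ (TPow m) (Fin 2)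
    have hY : ∀ s, tpowMap T m (e y s) = c ^ (n - ![1, -1] s) • e y s := by
      intro s
      have hs : c ^ (![1, -1] s : ℤ) • tpowMap T m (e y s) = c ^ n • e y s := calc
        _ = e (tpowMap T (m + 1) y) s := (piScalarRight_map_apply_of_monomial hT _ y s).symm
        _ = c ^ n • e y s := by rw [hy, map_smul]; rfl
      rwa [← smul_right_inj (zpow_ne_zero _ hc0), smul_smul, ← zpow_add₀ hc0, add_sub_cancel]
    obtain ⟨a, ha⟩ := Submodule.mem_span_singleton.1 (ih (by simp; omega) (hY 0))
    have hY1 : e y 1 = 0 := eq_zero_of_mem_span_vpow_of_tpowMap_eq hT0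
      (by rw [← zpow_natCast]; exact hc.ne (by simp; omega)) (ih (by simp; omega) (hY 1)) (hY 1)
    have he : e (vpow 0 (m + 1)) = Pi.single 0 (vpow 0 m) :=
      (e.symm_apply_eq.1 (TensorProduct.piScalarRight_symm_single ℂ ℂ (TPow m) (Fin 2) _ _)).symm
    refine Submodule.mem_span_singleton.2
      ⟨a, e.injective (funext (Fin.forall_fin_two.2 ⟨?_, ?_⟩))⟩
    · simp [he, ha]
    · simp [he, hY1]

end Eigenvectors

lemma subtype_mem_homG {G W : Type*} [Group G] [AddCommGroup W] [Module ℂ W]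
    (ρ : Representation ℂ G W) (p : Submodule ℂ W) : p.subtype ∈ homG ρ p :=
  fun _ _ _ h => h.symm

section Multiplicity

variable {G : Subgroup (GL (Fin 2) ℂ)} {c : ℂ} {a x : G}

theorem exists_eq_smul_subtype_of_mem_homG (hc : Function.Injective fun k : ℤ => c ^ k)
    (ha0 : Matrix.toLin' (a : GL (Fin 2) ℂ).val (bv 0) = c • bv 0)
    (ha1 : Matrix.toLin' (a : GL (Fin 2) ℂ).val (bv 1) = c⁻¹ • bv 1)
    (hx0 : Matrix.toLin' (x : GL (Fin 2) ℂ).val (bv 0) = bv 1) {m : ℕ}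
    {φ : Vsub m →ₗ[ℂ] TPow m} (hφ : φ ∈ homG (TPowRep G m) (Vsub m)) :
    ∃ k : ℂ, φ = k • (Vsub m).subtype := by
  let v : Fin 2 → Vsub m := fun s => ⟨vpow s m, vpow_mem_Vsub s m⟩
  have hφa : φ (c ^ (m + 1) • v 0) = tpowMap (Matrix.toLin' (a : GL (Fin 2) ℂ).val) m (φ (v 0)) :=
    TPowRep_apply G a m ▸
      hφ a (v 0) (c ^ (m + 1) • v 0) (by rw [TPowRep_apply, tpowMap_vpow ha0]; rfl)
  have hx0' := hx0.trans (one_smul ℂ _).symm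
  have hφx : φ (v 1) = tpowMap (Matrix.toLin' (x : GL (Fin 2) ℂ).val) m (φ (v 0)) :=
    TPowRep_apply G x m ▸
      hφ x (v 0) (v 1) (by rw [TPowRep_apply, tpowMap_vpow hx0', one_pow, one_smul])
  have heig : tpowMap (Matrix.toLin' (a : GL (Fin 2) ℂ).val) m (φ (v 0)) =
      c ^ ((m : ℤ) + 1) • φ (v 0) := by
    rw [← hφa, map_smul]
    norm_cast
  obtain ⟨k, hk⟩ := Submodule.mem_span_singleton.1
    (mem_span_vpow_of_tpowMap_eq_zpow_smul hc ha0 ha1 m le_rfl heig)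
  refine ⟨k, LinearMap.ext_on Submodule.span_span_coe_preimage ?_⟩
  rintro w (hw | hw)
  · obtain rfl : w = v 0 := Subtype.ext hw
    simp [← hk, v]
  · obtain rfl : w = v 1 := Subtype.ext hw
    simp [hφx, ← hk, v, tpowMap_vpow hx0']

theorem finrank_homG_TPowRep_Vsub (hc : Function.Injective fun k : ℤ => c ^ k)
    (ha0 : Matrix.toLin' (a : GL (Fin 2) ℂ).val (bv 0) = c • bv 0)
    (ha1 : Matrix.toLin' (a : GL (Fin 2) ℂ).val (bv 1) = c⁻¹ • bv 1)
    (hx0 : Matrix.toLin' (x : GL (Fin 2) ℂ).val (bv 0) = bv 1) (m : ℕ) :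
    Module.finrank ℂ (homG (TPowRep G m) (Vsub m)) = 1 := by
  have hspan : homG (TPowRep G m) (Vsub m) = ℂ ∙ (Vsub m).subtype := by
    refine le_antisymm (fun φ hφ => ?_) ((Submodule.span_singleton_le_iff_mem _ _).2
      (subtype_mem_homG _ _))
    obtain ⟨k, rfl⟩ := exists_eq_smul_subtype_of_mem_homG hc ha0 ha1 hx0 hφ
    exact Submodule.smul_mem _ _ (Submodule.mem_span_singleton_self _)
  rw [hspan]
  refine finrank_span_singleton fun h => vpow_ne_zero 0 m ?_
  simpa using LinearMap.congr_fun h ⟨vpow 0 m, vpow_mem_Vsub 0 m⟩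

end Multiplicity

/-- For every `j ≥ 1` (here `j = m+1`): the dicyclic Jones–Wenzl projector `f_j` is a
nonzero idempotent, is `Dic∞`-equivariant, its image is exactly the subspace `V_j` spanned
by `v₁^{⊗j}` and `v₂^{⊗j}`, and the simple representation `V_j` occurs in `V^{⊗j}` with
multiplicity one, i.e. `dim_ℂ Hom_{Dic∞}(V_j, V^{⊗j}) = 1`. -/
theorem fproj_idempotent_equivariant_range_multiplicityOne
    (θ : ℝ) (hθ : Irrational (θ / Real.pi)) (X A : GL (Fin 2) ℂ)
    (hX : (X : Matrix (Fin 2) (Fin 2) ℂ) = !![0, -1; 1, 0])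
    (hA : (A : Matrix (Fin 2) (Fin 2) ℂ) =
      !![Complex.exp (θ * Complex.I), 0; 0, Complex.exp (-(θ * Complex.I))])
    (G : Subgroup (GL (Fin 2) ℂ)) (hG : G = Subgroup.closure {X, A}) :
    ∀ m : ℕ,
      fproj m ∘ₗ fproj m = fproj m ∧
      fproj m ≠ 0 ∧
      (∀ g : G, fproj m ∘ₗ TPowRep G m g = TPowRep G m g ∘ₗ fproj m) ∧
      LinearMap.range (fproj m) = Vsub m ∧
      Module.finrank ℂ (homG (TPowRep G m) (Vsub m)) = 1 := by
  intro m
  subst hG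
  have hXbv (s : Fin 2) :
      Matrix.toLin' X.val (bv s) = (![1, -1] : Fin 2 → ℂ) s • bv (Equiv.swap 0 1 s) := by
    rw [hX, toLin'_rotation_bv]
  have hAbv (s : Fin 2) : Matrix.toLin' A.val (bv s) =
      ![Complex.exp (θ * Complex.I), (Complex.exp (θ * Complex.I))⁻¹] s • bv (Equiv.refl _ s) := by
    rw [hA, ← Complex.exp_neg, toLin'_diagonal_bv]
    rfl
  rw [fproj_eq_vsubProj]
  refine ⟨vsubProj_comp_self m, vsubProj_ne_zero m, fun g => ?_, range_vsubProj m,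
    finrank_homG_TPowRep_Vsub (a := ⟨A, Subgroup.subset_closure (by simp)⟩)
      (x := ⟨X, Subgroup.subset_closure (by simp)⟩) (injective_zpow_exp_mul_I hθ)
      (hAbv 0) (hAbv 1) (by simpa using hXbv 0) m⟩
  refine (commute_apply_of_closure_eq_top (TPowRep _ m) Subgroup.closure_closure_coe_preimage
    ?_ g).eq
  rintro g (hg | hg) <;> rw [TPowRep_apply, hg]
  exacts [vsubProj_comp_tpowMap_of_monomial hXbv m, vsubProj_comp_tpowMap_of_monomial hAbv m]
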